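/- arXiv:1309.4065 — 2 statements merged into one kernel-verified Lean document; each statement's English description precedes it below -/
import Mathlib

section
/- Let k₁, k₂ ∈ ℤ, n₁, n₂ ∈ ℕ and C > 0. If the hyperbolic distance in ℍ between the points k₁ + (exp n₁)·i and k₂ + (exp n₂)·i is at most C, then |n₁ − n₂| ≤ C and |k₁ − k₂| ≤ exp(C + max(n₁, n₂)). -/
/-- The point `k + (exp n)·i` of the hyperbolic upper half-plane `ℍ`. -/
noncomputable def horoPt (k : ℤ) (n : ℕ) : UpperHalfPlane :=
  ⟨⟨(k : ℝ), Real.exp n⟩, Real.exp_pos n⟩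

open Real

theorem UpperHalfPlane.abs_re_sub_le (z w : UpperHalfPlane) :
    |z.re - w.re| ≤ w.im * (exp (dist z w) - 1) :=
  calc |z.re - w.re| = |((z : ℂ) - w).re| := by simp
    _ ≤ dist (z : ℂ) w := (Complex.abs_re_le_norm _).trans_eq (dist_eq_norm _ _).symm
    _ ≤ w.im * (exp (dist z w) - 1) := UpperHalfPlane.dist_coe_le z w

@[simp]
theorem horoPt_re (k : ℤ) (n : ℕ) : (horoPt k n).re = k := rfl

@[simp]
theorem horoPt_im (k : ℤ) (n : ℕ) : (horoPt k n).im = exp n := rfl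

theorem stmt5_general (k₁ k₂ : ℤ) (n₁ n₂ : ℕ) (C : ℝ)
    (h : dist (horoPt k₁ n₁) (horoPt k₂ n₂) ≤ C) :
    |(n₁ : ℝ) - (n₂ : ℝ)| ≤ C ∧
    |(k₁ : ℝ) - (k₂ : ℝ)| ≤ Real.exp (C + (max n₁ n₂ : ℕ)) := by
  set d := dist (horoPt k₁ n₁) (horoPt k₂ n₂)
  have hlog := UpperHalfPlane.dist_log_im_le (horoPt k₁ n₁) (horoPt k₂ n₂)
  simp only [horoPt_im, log_exp, Real.dist_eq] at hlog
  refine ⟨hlog.trans h, ?_⟩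
  have hre := UpperHalfPlane.abs_re_sub_le (horoPt k₁ n₁) (horoPt k₂ n₂)
  simp only [horoPt_re, horoPt_im] at hre
  have hd : 1 ≤ exp d := one_le_exp dist_nonneg
  calc |(k₁ : ℝ) - k₂| ≤ exp n₂ * (exp d - 1) := hre
    _ ≤ exp (max n₁ n₂ : ℕ) * exp C := by
      gcongr
      · exact_mod_cast le_max_right n₁ n₂
      · linarith [exp_le_exp.2 h]
    _ = exp (C + (max n₁ n₂ : ℕ)) := by rw [exp_add, mul_comm]

/-- If two points `k₁ + (exp n₁)·i` and `k₂ + (exp n₂)·i` of `ℍ` are at hyperbolic distance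
at most `C`, then their height and horizontal coordinates differ boundedly. -/
theorem stmt5 (k₁ k₂ : ℤ) (n₁ n₂ : ℕ) (C : ℝ) (hC : 0 < C)
    (h : dist (horoPt k₁ n₁) (horoPt k₂ n₂) ≤ C) :
    |(n₁ : ℝ) - (n₂ : ℝ)| ≤ C ∧
    |(k₁ : ℝ) - (k₂ : ℝ)| ≤ Real.exp (C + (max n₁ n₂ : ℕ)) :=
  stmt5_general k₁ k₂ n₁ n₂ C h
end

section
/- For all integers a, b with a ≠ b, the graph distance in the combinatorial horoball over ℤ between the base vertices (a, 0) and (b, 0) satisfies d_G((a, 0), (b, 0)) ≥ 2·log|a − b| − 2 (natural logarithm). -/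
/-- The combinatorial horoball over `ℤ`: vertices `ℤ × ℕ`; `(x, n)` and `(y, n)` are adjacent
whenever `0 < |x - y| ≤ exp n`, and `(x, n)` is adjacent to `(x, n + 1)`. -/
def ZHoroball : SimpleGraph (ℤ × ℕ) where
  Adj u v :=
    (u.2 = v.2 ∧ 0 < |u.1 - v.1| ∧ ((|u.1 - v.1| : ℤ) : ℝ) ≤ Real.exp u.2) ∨
    (u.1 = v.1 ∧ (u.2 = v.2 + 1 ∨ v.2 = u.2 + 1))
  symm := by
    constructor
    rintro ⟨x, m⟩ ⟨y, n⟩ (⟨h1, h2, h3⟩ | ⟨h1, h2⟩)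
    · left
      refine ⟨h1.symm, by rwa [abs_sub_comm], ?_⟩
      rw [abs_sub_comm]
      simp only at h1 ⊢
      rw [← h1]
      exact h3
    · exact Or.inr ⟨h1.symm, h2.symm⟩
  loopless := by
    constructor
    rintro ⟨x, n⟩ (⟨_, h2, _⟩ | ⟨_, h2 | h2⟩) <;> simp_all

/-!
Send the vertex `(x, n)` to the point `x + i·eⁿ` of the hyperbolic upper half-plane `ℍ`.
Vertical edges go to hyperbolic segments of length exactly `1`, and a horizontal edge at height
`n` joins points at height `eⁿ` whose real parts differ by at most `eⁿ`, so it has length at most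
`2 arsinh (1/2) ≤ 1`. Hence the map is `1`-Lipschitz from the graph metric, and the graph
distance of `(a, 0)` and `(b, 0)` is at least their hyperbolic distance
`2 arsinh (|a - b| / 2) ≥ 2 log |a - b|`.
-/

open Real

theorem Real.arsinh_le_self {x : ℝ} (hx : 0 ≤ x) : arsinh x ≤ x := by
  conv_rhs => rw [← arsinh_sinh x]
  exact arsinh_le_arsinh.mpr (self_le_sinh_iff.mpr hx)

theorem Real.log_le_arsinh_half {x : ℝ} (hx : 0 ≤ x) : log x ≤ arsinh (x / 2) := by
  rcases hx.eq_or_lt with rfl | hx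
  · simp
  rw [← arsinh_sinh (log x), sinh_log hx, arsinh_le_arsinh]
  have : 0 ≤ x⁻¹ := inv_nonneg.mpr hx.le
  linarith

theorem SimpleGraph.Walk.dist_le_length_of_adj {V α : Type*} [PseudoMetricSpace α]
    {G : SimpleGraph V} {f : V → α} (hf : ∀ ⦃u v⦄, G.Adj u v → Dist.dist (f u) (f v) ≤ 1)
    {u v : V} (p : G.Walk u v) : Dist.dist (f u) (f v) ≤ p.length := by
  induction p with
  | nil => simp
  | @cons u w v huw _ ih =>
    calc _ ≤ Dist.dist (f u) (f w) + Dist.dist (f w) (f v) := dist_triangle _ _ _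
      _ ≤ 1 + _ := add_le_add (hf huw) ih
      _ = _ := by rw [SimpleGraph.Walk.length_cons]; push_cast; ring

theorem SimpleGraph.Reachable.dist_le_dist_of_adj {V α : Type*} [PseudoMetricSpace α]
    {G : SimpleGraph V} {f : V → α} (hf : ∀ ⦃u v⦄, G.Adj u v → Dist.dist (f u) (f v) ≤ 1)
    {u v : V} (h : G.Reachable u v) : Dist.dist (f u) (f v) ≤ G.dist u v := by
  obtain ⟨p, hp⟩ := h.exists_walk_length_eq_dist
  exact hp ▸ p.dist_le_length_of_adj hf

namespace UpperHalfPlane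

theorem dist_of_im_eq {z w : ℍ} (h : z.im = w.im) :
    dist z w = 2 * arsinh (dist z.re w.re / (2 * z.im)) := by
  rw [dist_eq, Complex.dist_of_im_eq (by simpa using h), h, sqrt_mul_self w.im_pos.le]
  rfl

theorem dist_le_one_of_im_eq {z w : ℍ} (h : z.im = w.im) (hre : dist z.re w.re ≤ z.im) :
    dist z w ≤ 1 := by
  have hquot : dist z.re w.re / (2 * z.im) ≤ 1 / 2 := by
    rw [div_le_div_iff₀ (by linarith [z.im_pos]) two_pos]
    linarith
  calc dist z w = 2 * arsinh (dist z.re w.re / (2 * z.im)) := dist_of_im_eq h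
    _ ≤ 2 * arsinh (1 / 2) := by gcongr
    _ ≤ 1 := by linarith [arsinh_le_self (x := 1 / 2) (by norm_num)]

end UpperHalfPlane

namespace ZHoroball

noncomputable def toUpperHalfPlane (v : ℤ × ℕ) : UpperHalfPlane :=
  UpperHalfPlane.mk ⟨v.1, exp v.2⟩ (exp_pos _)

theorem dist_toUpperHalfPlane_of_fst_eq (x : ℤ) (m n : ℕ) :
    dist (toUpperHalfPlane (x, m)) (toUpperHalfPlane (x, n)) = dist (m : ℝ) n :=
  (UpperHalfPlane.isometry_vertical_line x).dist_eq m n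

theorem dist_toUpperHalfPlane_of_snd_eq (x y : ℤ) (n : ℕ) :
    dist (toUpperHalfPlane (x, n)) (toUpperHalfPlane (y, n))
      = 2 * arsinh (|(x : ℝ) - y| / (2 * exp n)) :=
  UpperHalfPlane.dist_of_im_eq rfl

theorem dist_toUpperHalfPlane_le_one_of_adj ⦃u v : ℤ × ℕ⦄ (h : ZHoroball.Adj u v) :
    dist (toUpperHalfPlane u) (toUpperHalfPlane v) ≤ 1 := by
  obtain ⟨x, m⟩ := u
  obtain ⟨y, n⟩ := v
  rcases h with ⟨rfl : m = n, -, hxy⟩ | ⟨rfl : x = y, rfl | rfl⟩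
  · refine UpperHalfPlane.dist_le_one_of_im_eq rfl ?_
    simpa [toUpperHalfPlane, Real.dist_eq] using hxy
  · rw [dist_toUpperHalfPlane_of_fst_eq, Real.dist_eq]; simp
  · rw [dist_toUpperHalfPlane_of_fst_eq, Real.dist_eq]; simp

theorem adj_base_succ (x : ℤ) : ZHoroball.Adj (x, 0) (x + 1, 0) :=
  Or.inl ⟨rfl, by simp, by simp⟩

theorem reachable_base (a b : ℤ) : ZHoroball.Reachable (a, 0) (b, 0) := by
  suffices ∀ c : ℤ, ZHoroball.Reachable (a, 0) (a + c, 0) by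
    simpa using this (b - a)
  intro c
  induction c using Int.induction_on with
  | zero => simp
  | succ c ih =>
    exact ih.trans <| by simpa [add_assoc] using (adj_base_succ (a + c)).reachable
  | pred c ih =>
    have step := (adj_base_succ (a + -c - 1)).symm.reachable
    exact ih.trans <| by simpa [sub_eq_add_neg, add_assoc] using step

end ZHoroball

theorem stmt7_general (a b : ℤ) :
    2 * Real.log |(a : ℝ) - (b : ℝ)| - 2 ≤ (ZHoroball.dist (a, 0) (b, 0) : ℝ) := by
  have hdist := (ZHoroball.reachable_base a b).dist_le_dist_of_adj
    ZHoroball.dist_toUpperHalfPlane_le_one_of_adj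
  rw [ZHoroball.dist_toUpperHalfPlane_of_snd_eq] at hdist
  have hlog := log_le_arsinh_half (abs_nonneg ((a : ℝ) - b))
  simp only [Nat.cast_zero, exp_zero, mul_one] at hdist
  linarith

/-- The graph distance between base vertices of the combinatorial horoball over `ℤ` is at
least `2·log|a − b| − 2`. -/
theorem stmt7 (a b : ℤ) (hab : a ≠ b) :
    2 * Real.log |(a : ℝ) - (b : ℝ)| - 2 ≤ (ZHoroball.dist (a, 0) (b, 0) : ℝ) :=
  stmt7_general a b
end
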